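/- Let E, F be real Banach spaces, M ⊆ E open, h : M → ℝ a C^k function whose derivative is nonzero at every point of h⁻¹(0), and f₁, f₂ : M → F C^k maps vanishing identically on h⁻¹(0), with k ≥ r ≥ 2. Let f̂₁, f̂₂ : M → F be the C^{k−1} maps obtained by division: f̂_i(m) = f_i(m)/h(m) for h(m) ≠ 0, extended over h⁻¹(0) by the unique continuous extension (f̂_i(m) = e_i(m) where Df_i(m)·u = (dh(m)·u)·e_i(m) for all u ∈ E). If f₂ = f₁ + O(h^r), then f̂₂ = f̂₁ + O(h^{r−1}) and res^{r−1}(f̂₂, f̂₁)(m) = res^r(f₂, f₁)(m) for every m ∈ h⁻¹(0). -/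

import Mathlib

open Set

noncomputable section

/-- `v` is the value at `m₀` of a residual witness for `f₂ = f₁ + O(φ^r)`:
on a neighborhood of `m₀` inside `M`, `f₂ - f₁ = φ^r · δ` with `δ` continuous at `m₀`
and `δ m₀ = v`. -/
def IsResidualAt {E F : Type*} [NormedAddCommGroup E] [NormedSpace ℝ E]
    [NormedAddCommGroup F] [NormedSpace ℝ F]
    (M : Set E) (φ : E → ℝ) (r : ℕ) (f₁ f₂ : E → F) (m₀ : E) (v : F) : Prop :=
  ∃ U : Set E, IsOpen U ∧ m₀ ∈ U ∧ U ⊆ M ∧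
    ∃ δ : E → F, ContinuousAt δ m₀ ∧ δ m₀ = v ∧
      ∀ m ∈ U, f₂ m - f₁ m = φ m ^ r • δ m

/-- `f₂ = f₁ + O(φ^r)` on `M`: at every point of the zero set of `φ` in `M` there is
a residual. -/
def BigOOrder {E F : Type*} [NormedAddCommGroup E] [NormedSpace ℝ E]
    [NormedAddCommGroup F] [NormedSpace ℝ F]
    (M : Set E) (φ : E → ℝ) (r : ℕ) (f₁ f₂ : E → F) : Prop :=
  ∀ m₀ ∈ M, φ m₀ = 0 → ∃ v : F, IsResidualAt M φ r f₁ f₂ m₀ v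

/-!
Write `f₂ - f₁ = φ^r • δ` near a zero `m` of `φ`. Since `r ≥ 2` this difference is
`φ • (φ^(r-1) • δ)`, a product of a function vanishing to first order with one tending to `0`,
so `Df₁(m) = Df₂(m)`. As `dφ(m) ≠ 0`, the blow-up values `e_i(m)` in `Df_i(m) = dφ(m) ⊗ e_i(m)`
coincide, hence `f̂₂ - f̂₁` (`fh₂ - fh₁`) vanishes on the zero set; off it, `f̂₂ - f̂₁ = φ⁻¹ • φ^r • δ = φ^(r-1) • δ`,
with the same `δ`.
-/

open Filter Topology Asymptotics

section
variable {E F : Type*} [NormedAddCommGroup E] [NormedSpace ℝ E]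
  [NormedAddCommGroup F] [NormedSpace ℝ F]

theorem HasFDerivAt.smul_of_tendsto_zero {φ : E → ℝ} {ψ : E → F} {m : E}
    (hφ : DifferentiableAt ℝ φ m) (hφm : φ m = 0) (hψ : Tendsto ψ (𝓝 m) (𝓝 0)) :
    HasFDerivAt (fun y => φ y • ψ y) (0 : E →L[ℝ] F) m := by
  refine .of_isLittleO ?_
  have hφO : φ =O[𝓝 m] fun y => y - m := by
    simpa [hφm] using hφ.hasFDerivAt.isBigO_sub
  simpa [hφm] using (hφO.norm_right.smul_isLittleO ((isLittleO_one_iff ℝ).mpr hψ)).norm_right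

theorem pow_smul_eq_smul_pow_pred_smul {r : ℕ} (hr : 1 ≤ r) (a : ℝ) (x : F) :
    a ^ r • x = a • a ^ (r - 1) • x := by
  rw [smul_smul, ← pow_succ', Nat.sub_add_cancel hr]

theorem HasFDerivAt.pow_smul_of_two_le {φ : E → ℝ} {δ : E → F} {m : E} {r : ℕ} (hr : 2 ≤ r)
    (hφ : DifferentiableAt ℝ φ m) (hφm : φ m = 0) (hδ : ContinuousAt δ m) :
    HasFDerivAt (fun y => φ y ^ r • δ y) (0 : E →L[ℝ] F) m := by
  have hψ : Tendsto (fun y => φ y ^ (r - 1) • δ y) (𝓝 m) (𝓝 0) := by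
    have : ContinuousAt (fun y => φ y ^ (r - 1) • δ y) m := (hφ.continuousAt.pow _).smul hδ
    rwa [ContinuousAt, hφm, zero_pow (by omega), zero_smul] at this
  simpa only [pow_smul_eq_smul_pow_pred_smul (by omega : 1 ≤ r)] using
    HasFDerivAt.smul_of_tendsto_zero hφ hφm hψ

theorem eq_of_forall_apply_smul_eq {ℓ : E →L[ℝ] ℝ} (hℓ : ℓ ≠ 0) {a b : F}
    (h : ∀ u, ℓ u • a = ℓ u • b) : a = b := by
  obtain ⟨u, hu⟩ : ∃ u, ℓ u ≠ 0 := by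
    by_contra! h0
    exact hℓ (ContinuousLinearMap.ext h0)
  exact smul_right_injective F hu (h u)

theorem fderiv_eq_of_isResidualAt {M : Set E} {φ : E → ℝ} {r : ℕ} (hr : 2 ≤ r)
    {f₁ f₂ : E → F} {m : E} {v : F} (hφ : DifferentiableAt ℝ φ m) (hφm : φ m = 0)
    (hf₁ : DifferentiableAt ℝ f₁ m) (hf₂ : DifferentiableAt ℝ f₂ m)
    (hres : IsResidualAt M φ r f₁ f₂ m v) : fderiv ℝ f₁ m = fderiv ℝ f₂ m := by
  obtain ⟨U, hU, hmU, -, δ, hδ, -, hδeq⟩ := hres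
  have hflat : HasFDerivAt (fun y => f₂ y - f₁ y) (0 : E →L[ℝ] F) m :=
    (HasFDerivAt.pow_smul_of_two_le hr hφ hφm hδ).congr_of_eventuallyEq
      (eventually_of_mem (hU.mem_nhds hmU) hδeq)
  exact (sub_eq_zero.mp ((hf₂.hasFDerivAt.sub hf₁.hasFDerivAt).unique hflat)).symm

theorem IsResidualAt.div {M : Set E} {φ : E → ℝ} {r : ℕ} (hr : 2 ≤ r)
    {f₁ f₂ fh₁ fh₂ : E → F} {m : E} {v : F}
    (hfh₁ : ∀ m ∈ M, φ m ≠ 0 → fh₁ m = (φ m)⁻¹ • f₁ m)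
    (hfh₂ : ∀ m ∈ M, φ m ≠ 0 → fh₂ m = (φ m)⁻¹ • f₂ m)
    (hzero : ∀ m ∈ M, φ m = 0 → fh₁ m = fh₂ m)
    (hres : IsResidualAt M φ r f₁ f₂ m v) : IsResidualAt M φ (r - 1) fh₁ fh₂ m v := by
  obtain ⟨U, hU, hmU, hUM, δ, hδ, hδv, hδeq⟩ := hres
  refine ⟨U, hU, hmU, hUM, δ, hδ, hδv, fun y hy => ?_⟩
  by_cases hφy : φ y = 0
  · rw [hzero y (hUM hy) hφy, sub_self, hφy, zero_pow (by omega), zero_smul]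
  · rw [hfh₁ y (hUM hy) hφy, hfh₂ y (hUM hy) hφy, ← smul_sub, hδeq y hy,
      pow_smul_eq_smul_pow_pred_smul (by omega), inv_smul_smul₀ hφy]

end

theorem stmt7_general {E F : Type*}
    [NormedAddCommGroup E] [NormedSpace ℝ E]
    [NormedAddCommGroup F] [NormedSpace ℝ F]
    (M : Set E) (hMo : IsOpen M) (k r : ℕ) (hr : 2 ≤ r) (hkr : r ≤ k)
    (φ : E → ℝ) (hφ : ContDiffOn ℝ k φ M)
    (hφd : ∀ m ∈ M, φ m = 0 → fderiv ℝ φ m ≠ 0)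
    (f₁ f₂ : E → F)
    (hf₁ : ContDiffOn ℝ k f₁ M) (hf₂ : ContDiffOn ℝ k f₂ M)
    (fh₁ fh₂ : E → F)
    (hfh₁ : ∀ m ∈ M, φ m ≠ 0 → fh₁ m = (φ m)⁻¹ • f₁ m)
    (hfh₂ : ∀ m ∈ M, φ m ≠ 0 → fh₂ m = (φ m)⁻¹ • f₂ m)
    (hfh₁0 : ∀ m ∈ M, φ m = 0 → ∀ u : E, fderiv ℝ f₁ m u = fderiv ℝ φ m u • fh₁ m)
    (hfh₂0 : ∀ m ∈ M, φ m = 0 → ∀ u : E, fderiv ℝ f₂ m u = fderiv ℝ φ m u • fh₂ m)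
    (hO : BigOOrder M φ r f₁ f₂) :
    BigOOrder M φ (r - 1) fh₁ fh₂ ∧
    ∀ m ∈ M, φ m = 0 → ∀ v : F,
      IsResidualAt M φ r f₁ f₂ m v → IsResidualAt M φ (r - 1) fh₁ fh₂ m v := by
  have hk : (k : WithTop ℕ∞) ≠ 0 := by exact_mod_cast (by omega : k ≠ 0)
  have hzero : ∀ m ∈ M, φ m = 0 → fh₁ m = fh₂ m := by
    intro m hm hφm
    have hmM := hMo.mem_nhds hm
    obtain ⟨v, hv⟩ := hO m hm hφm
    have hDf : fderiv ℝ f₁ m = fderiv ℝ f₂ m :=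
      fderiv_eq_of_isResidualAt hr ((hφ.differentiableOn hk).differentiableAt hmM) hφm
        ((hf₁.differentiableOn hk).differentiableAt hmM)
        ((hf₂.differentiableOn hk).differentiableAt hmM) hv
    refine eq_of_forall_apply_smul_eq (hφd m hm hφm) fun u => ?_
    rw [← hfh₁0 m hm hφm u, ← hfh₂0 m hm hφm u, hDf]
  have hres : ∀ m ∈ M, φ m = 0 → ∀ v : F,
      IsResidualAt M φ r f₁ f₂ m v → IsResidualAt M φ (r - 1) fh₁ fh₂ m v :=
    fun _ _ _ _ hv => hv.div hr hfh₁ hfh₂ hzero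
  exact ⟨fun m hm hφm => (hO m hm hφm).imp (hres m hm hφm), hres⟩

/-- Division by the step function decreases contact order by exactly one and
preserves the residual. -/
theorem stmt7 {E F : Type*}
    [NormedAddCommGroup E] [NormedSpace ℝ E] [CompleteSpace E]
    [NormedAddCommGroup F] [NormedSpace ℝ F] [CompleteSpace F]
    (M : Set E) (hMo : IsOpen M) (k r : ℕ) (hr : 2 ≤ r) (hkr : r ≤ k)
    (φ : E → ℝ) (hφ : ContDiffOn ℝ k φ M)
    (hφd : ∀ m ∈ M, φ m = 0 → fderiv ℝ φ m ≠ 0)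
    (f₁ f₂ : E → F)
    (hf₁ : ContDiffOn ℝ k f₁ M) (hf₂ : ContDiffOn ℝ k f₂ M)
    (hf₁0 : ∀ m ∈ M, φ m = 0 → f₁ m = 0)
    (hf₂0 : ∀ m ∈ M, φ m = 0 → f₂ m = 0)
    (fh₁ fh₂ : E → F)
    (hfh₁ : ∀ m ∈ M, φ m ≠ 0 → fh₁ m = (φ m)⁻¹ • f₁ m)
    (hfh₂ : ∀ m ∈ M, φ m ≠ 0 → fh₂ m = (φ m)⁻¹ • f₂ m)
    (hfh₁0 : ∀ m ∈ M, φ m = 0 → ∀ u : E, fderiv ℝ f₁ m u = fderiv ℝ φ m u • fh₁ m)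
    (hfh₂0 : ∀ m ∈ M, φ m = 0 → ∀ u : E, fderiv ℝ f₂ m u = fderiv ℝ φ m u • fh₂ m)
    (hO : BigOOrder M φ r f₁ f₂) :
    BigOOrder M φ (r - 1) fh₁ fh₂ ∧
    ∀ m ∈ M, φ m = 0 → ∀ v : F,
      IsResidualAt M φ r f₁ f₂ m v → IsResidualAt M φ (r - 1) fh₁ fh₂ m v :=
  stmt7_general M hMo k r hr hkr φ hφ hφd f₁ f₂ hf₁ hf₂ fh₁ fh₂ hfh₁ hfh₂ hfh₁0 hfh₂0 hO

end
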